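/- Purification norm identity (Jarzynski in disguise): Let |Ψ₀⟩ = (1/√Z₀) ∑ₘ e^{-β ε₀ₘ/2} |φ₀ₘ⟩ ⊗ |φ₀ₘ*⟩ be the thermofield double state of H₀, let W = H₁ ⊗ 1 − 1 ⊗ H₀*, and 𝒰 a unitary on the first factor. Then ‖ e^{-βW/2} (𝒰 ⊗ 1) |Ψ₀⟩ ‖ = √(Z₁/Z₀) = e^{-β ΔA/2}. -/

import Mathlib

open scoped BigOperators

/-- The elementary tensor `u ⊗ v`, realized on the doubled Euclidean space. -/
noncomputable def tensorVec {N : ℕ} (u v : EuclideanSpace ℂ (Fin N)) :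
    EuclideanSpace ℂ (Fin N × Fin N) :=
  (WithLp.equiv 2 _).symm fun p => u p.1 * v p.2

/-- Entrywise complex conjugation of a vector (in the computational basis). -/
noncomputable def starVec {N : ℕ} (u : EuclideanSpace ℂ (Fin N)) :
    EuclideanSpace ℂ (Fin N) :=
  (WithLp.equiv 2 _).symm fun i => star (u i)

/-! Expanding `(𝒰 ⊗ 1)|Ψ₀⟩` in the eigenbasis `|φ₁ₙ⟩ ⊗ |φ₀ₘ*⟩` of `W` gives the coefficients
`Z₀^{-1/2} e^{-βε₀ₘ/2} ⟨φ₁ₙ|𝒰|φ₀ₘ⟩`, and `e^{-βW/2}` multiplies them by `e^{-β(ε₁ₙ - ε₀ₘ)/2}`,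
which cancels their dependence on `ε₀ₘ`. The squared norm is therefore
`Z₀⁻¹ ∑ₙ e^{-βε₁ₙ} ∑ₘ |⟨φ₁ₙ|𝒰|φ₀ₘ⟩|²`, and each inner sum is `1` because `𝒰` maps `φ₀` to an
orthonormal basis. -/

open scoped InnerProductSpace

section Tensor

variable {N : ℕ}

@[simp]
lemma tensorVec_apply (u v : EuclideanSpace ℂ (Fin N)) (p : Fin N × Fin N) :
    tensorVec u v p = u p.1 * v p.2 := rfl

@[simp]
lemma starVec_apply (u : EuclideanSpace ℂ (Fin N)) (i : Fin N) :
    starVec u i = star (u i) := rfl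

lemma inner_tensorVec (u v u' v' : EuclideanSpace ℂ (Fin N)) :
    ⟪tensorVec u v, tensorVec u' v'⟫_ℂ = ⟪u, u'⟫_ℂ * ⟪v, v'⟫_ℂ := by
  simp only [PiLp.inner_apply, tensorVec_apply, RCLike.inner_apply, Fintype.sum_prod_type,
    Finset.sum_mul_sum, map_mul]
  exact Finset.sum_congr rfl fun _ _ => Finset.sum_congr rfl fun _ _ => by ring

lemma inner_starVec (u v : EuclideanSpace ℂ (Fin N)) :
    ⟪starVec u, starVec v⟫_ℂ = star ⟪u, v⟫_ℂ := by
  simp [PiLp.inner_apply, star_sum, mul_comm]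

lemma tensorVec_smul_left (c : ℂ) (u v : EuclideanSpace ℂ (Fin N)) :
    tensorVec (c • u) v = c • tensorVec u v := by
  ext p
  simp [mul_assoc]

lemma tensorVec_sum_left {ι : Type*} (s : Finset ι) (f : ι → EuclideanSpace ℂ (Fin N))
    (v : EuclideanSpace ℂ (Fin N)) :
    tensorVec (∑ i ∈ s, f i) v = ∑ i ∈ s, tensorVec (f i) v := by
  ext p
  simp [Finset.sum_mul]

lemma tensorVec_eq_sum_inner_smul (b : OrthonormalBasis (Fin N) ℂ (EuclideanSpace ℂ (Fin N)))
    (u v : EuclideanSpace ℂ (Fin N)) :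
    tensorVec u v = ∑ n, ⟪b n, u⟫_ℂ • tensorVec (b n) v := by
  conv_lhs => rw [← b.sum_repr' u]
  simp only [tensorVec_sum_left, tensorVec_smul_left]

lemma sum_smul_tensorVec_eq_sum_inner_smul {ι : Type*} [Fintype ι]
    (b : OrthonormalBasis (Fin N) ℂ (EuclideanSpace ℂ (Fin N))) (a : ι → ℂ)
    (u v : ι → EuclideanSpace ℂ (Fin N)) :
    ∑ m, a m • tensorVec (u m) (v m)
      = ∑ p : Fin N × ι, (a p.2 * ⟪b p.1, u p.2⟫_ℂ) • tensorVec (b p.1) (v p.2) := by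
  rw [Fintype.sum_prod_type_right]
  refine Finset.sum_congr rfl fun m _ => ?_
  rw [tensorVec_eq_sum_inner_smul b, Finset.smul_sum]
  simp only [smul_smul]

lemma Orthonormal.starVec {ι : Type*} {u : ι → EuclideanSpace ℂ (Fin N)}
    (hu : Orthonormal ℂ u) : Orthonormal ℂ fun i => starVec (u i) := by
  classical
  rw [orthonormal_iff_ite] at hu ⊢
  intro i j
  rw [inner_starVec, hu]
  split_ifs <;> simp

lemma Orthonormal.tensorVec {ι κ : Type*} {u : ι → EuclideanSpace ℂ (Fin N)}
    {v : κ → EuclideanSpace ℂ (Fin N)} (hu : Orthonormal ℂ u) (hv : Orthonormal ℂ v) :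
    Orthonormal ℂ fun p : ι × κ => tensorVec (u p.1) (v p.2) := by
  classical
  rw [orthonormal_iff_ite] at hu hv ⊢
  rintro ⟨i, k⟩ ⟨j, l⟩
  rw [inner_tensorVec, hu, hv]
  by_cases hij : i = j <;> by_cases hkl : k = l <;> simp [hij, hkl]

end Tensor

lemma Orthonormal.norm_sum_smul_sq {𝕜 E ι : Type*} [RCLike 𝕜] [NormedAddCommGroup E]
    [InnerProductSpace 𝕜 E] {v : ι → E} (hv : Orthonormal 𝕜 v) (s : Finset ι) (c : ι → 𝕜) :
    ‖∑ i ∈ s, c i • v i‖ ^ 2 = ∑ i ∈ s, ‖c i‖ ^ 2 := by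
  have : ((‖∑ i ∈ s, c i • v i‖ : ℝ) : 𝕜) ^ 2 = ∑ i ∈ s, ((‖c i‖ : ℝ) : 𝕜) ^ 2 := by
    simp only [← inner_self_eq_norm_sq_to_K, hv.inner_sum, RCLike.conj_mul]
  exact mod_cast this

lemma OrthonormalBasis.sum_sq_norm_mul_inner_map {𝕜 E ι κ : Type*} [RCLike 𝕜]
    [NormedAddCommGroup E] [InnerProductSpace 𝕜 E] [Fintype ι] [Fintype κ]
    (b : OrthonormalBasis ι 𝕜 E) (b' : OrthonormalBasis κ 𝕜 E) (U : E ≃ₗᵢ[𝕜] E) (w : κ → 𝕜) :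
    ∑ p : κ × ι, ‖w p.1 * ⟪b' p.1, U (b p.2)⟫_𝕜‖ ^ 2 = ∑ n, ‖w n‖ ^ 2 := by
  have hparseval : ∀ n, ∑ m, ‖⟪b' n, U (b m)⟫_𝕜‖ ^ 2 = 1 := fun n => by
    simpa [b'.orthonormal.1 n] using (b.map U).sum_sq_norm_inner_left (b' n)
  simp only [Fintype.sum_prod_type, norm_mul, mul_pow, ← Finset.mul_sum, hparseval, mul_one]

lemma ContinuousLinearMap.exp_apply_of_apply_eq_smul {𝕜 E : Type*} [RCLike 𝕜]
    [NormedAddCommGroup E] [NormedSpace 𝕜 E] [CompleteSpace E] {A : E →L[𝕜] E} {v : E} {μ : 𝕜}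
    (h : A v = μ • v) : NormedSpace.exp A v = NormedSpace.exp μ • v := by
  have hpow : ∀ n : ℕ, (A ^ n) v = μ ^ n • v := fun n => by
    induction n with
    | zero => simp
    | succ n ih => rw [pow_succ, mul_apply_eq_comp, h, map_smul, ih, smul_smul, ← pow_succ']
  have hA := (NormedSpace.exp_series_hasSum_exp' (𝕂 := 𝕜) A).mapL (apply 𝕜 E v)
  have hμ := (NormedSpace.exp_series_hasSum_exp' (𝕂 := 𝕜) μ).smul_const v
  simp only [apply_apply, smul_apply, hpow, smul_smul, smul_eq_mul] at hA hμ
  exact hA.unique hμ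

lemma ContinuousLinearMap.exp_real_smul_apply_of_apply_eq_smul {E : Type*}
    [NormedAddCommGroup E] [NormedSpace ℂ E] [CompleteSpace E] {A : E →L[ℂ] E} {v : E} {r : ℝ}
    (h : A v = (r : ℂ) • v) (t : ℝ) :
    NormedSpace.exp ((t : ℂ) • A) v = (Real.exp (t * r) : ℂ) • v := by
  refine (exp_apply_of_apply_eq_smul (μ := ((t * r : ℝ) : ℂ)) ?_).trans ?_
  · rw [smul_apply, h, smul_smul, Complex.ofReal_mul]
  · rw [← Complex.exp_eq_exp_ℂ, Complex.ofReal_exp]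

lemma sum_exp_pos {ι : Type*} [Fintype ι] [Nonempty ι] (f : ι → ℝ) :
    0 < ∑ i, Real.exp (f i) :=
  Finset.sum_pos (fun _ _ => Real.exp_pos _) Finset.univ_nonempty

lemma norm_sq_inv_sqrt_mul_exp_half {Z : ℝ} (hZ : 0 ≤ Z) (x : ℝ) :
    ‖(((Real.sqrt Z)⁻¹ * Real.exp (x / 2) : ℝ) : ℂ)‖ ^ 2 = Real.exp x / Z := by
  rw [Complex.norm_real, Real.norm_eq_abs, sq_abs, mul_pow, inv_pow, Real.sq_sqrt hZ,
    ← Real.exp_nat_mul, inv_mul_eq_div]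
  ring_nf

lemma sqrt_eq_exp_neg_half_mul_freeEnergy {β r : ℝ} (hβ : 0 < β) (hr : 0 < r) :
    Real.sqrt r = Real.exp (-β * (-(1 / β) * Real.log r) / 2) := by
  rw [Real.sqrt_eq_rpow, Real.rpow_def_of_pos hr]
  congr 1
  field_simp

theorem purification_norm_identity_general {N : ℕ} (hN : 0 < N)
    (φ₀ φ₁ : OrthonormalBasis (Fin N) ℂ (EuclideanSpace ℂ (Fin N)))
    (e0 e1 : Fin N → ℝ)
    (𝒰 : EuclideanSpace ℂ (Fin N) ≃ₗᵢ[ℂ] EuclideanSpace ℂ (Fin N))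
    (β : ℝ)
    (Z₀ Z₁ : ℝ)
    (hZ₀ : Z₀ = ∑ m, Real.exp (-β * e0 m))
    (hZ₁ : Z₁ = ∑ n, Real.exp (-β * e1 n))
    (W UI : EuclideanSpace ℂ (Fin N × Fin N) →L[ℂ] EuclideanSpace ℂ (Fin N × Fin N))
    (hW : ∀ m n, W (tensorVec (φ₁ n) (starVec (φ₀ m)))
        = ((e1 n - e0 m : ℝ) : ℂ) • tensorVec (φ₁ n) (starVec (φ₀ m)))
    (hUI : ∀ u v, UI (tensorVec u v) = tensorVec (𝒰 u) v)
    (Ψ₀ : EuclideanSpace ℂ (Fin N × Fin N))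
    (hΨ₀ : Ψ₀ = ((Real.sqrt Z₀ : ℝ) : ℂ)⁻¹ •
        ∑ m, ((Real.exp (-β * e0 m / 2) : ℝ) : ℂ) • tensorVec (φ₀ m) (starVec (φ₀ m))) :
    ‖(NormedSpace.exp (((-(β / 2) : ℝ) : ℂ) • W)) (UI Ψ₀)‖ = Real.sqrt (Z₁ / Z₀) ∧
    (0 < β →
      Real.sqrt (Z₁ / Z₀) =
        Real.exp (-β * (-(1 / β) * Real.log (Z₁ / Z₀)) / 2)) := by
  have : Nonempty (Fin N) := Fin.pos_iff_nonempty.mp hN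
  have hZ₀pos : 0 < Z₀ := hZ₀ ▸ sum_exp_pos _
  have hZ₁pos : 0 < Z₁ := hZ₁ ▸ sum_exp_pos _
  let w : Fin N → ℂ := fun n => ((Real.sqrt Z₀)⁻¹ * Real.exp (-β * e1 n / 2) : ℝ)
  have hX : NormedSpace.exp (((-(β / 2) : ℝ) : ℂ) • W) (UI Ψ₀) = ∑ p : Fin N × Fin N,
      (w p.1 * ⟪φ₁ p.1, 𝒰 (φ₀ p.2)⟫_ℂ) • tensorVec (φ₁ p.1) (starVec (φ₀ p.2)) := by
    rw [hΨ₀, map_smul, map_sum]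
    simp only [map_smul, hUI, Finset.smul_sum, smul_smul]
    rw [sum_smul_tensorVec_eq_sum_inner_smul φ₁]
    simp only [map_sum, map_smul, smul_smul,
      ContinuousLinearMap.exp_real_smul_apply_of_apply_eq_smul (hW _ _)]
    refine Finset.sum_congr rfl fun p _ => congrArg (· • _) ?_
    have hboltzmann : (Real.exp (-β * e0 p.2 / 2) : ℂ) * Real.exp (-(β / 2) * (e1 p.1 - e0 p.2))
        = Real.exp (-β * e1 p.1 / 2) := by
      rw [← Complex.ofReal_mul, ← Real.exp_add]; ring_nf
    simp only [w, Complex.ofReal_mul, Complex.ofReal_inv]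
    linear_combination ((Real.sqrt Z₀ : ℂ))⁻¹ * ⟪φ₁ p.1, 𝒰 (φ₀ p.2)⟫_ℂ * hboltzmann
  have hnorm : ‖NormedSpace.exp (((-(β / 2) : ℝ) : ℂ) • W) (UI Ψ₀)‖ ^ 2 = Z₁ / Z₀ := by
    rw [hX, (φ₁.orthonormal.tensorVec φ₀.orthonormal.starVec).norm_sum_smul_sq,
      φ₀.sum_sq_norm_mul_inner_map φ₁ 𝒰 w, hZ₁, Finset.sum_div]
    exact Finset.sum_congr rfl fun n _ => norm_sq_inv_sqrt_mul_exp_half hZ₀pos.le _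
  refine ⟨by rw [← hnorm, Real.sqrt_sq (norm_nonneg _)], fun hβ => ?_⟩
  exact sqrt_eq_exp_neg_half_mul_freeEnergy hβ (div_pos hZ₁pos hZ₀pos)

/-- **Purification norm identity (Jarzynski in disguise).**
Let `|Ψ₀⟩ = Z₀^{-1/2} ∑ₘ e^{-β e0ₘ/2} |φ₀ₘ⟩⊗|φ₀ₘ*⟩` be the thermofield double of `H₀`,
`W = H₁ ⊗ 1 − 1 ⊗ H₀*` (characterized by its eigenbasis `|φ₁ₙ⟩⊗|φ₀ₘ*⟩` with
eigenvalues `e1ₙ − e0ₘ`), `UI = 𝒰 ⊗ 1`.  Then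
`‖e^{-βW/2} (𝒰⊗1)|Ψ₀⟩‖ = √(Z₁/Z₀) = e^{-β ΔA/2}`. -/
theorem purification_norm_identity {N : ℕ} (hN : 0 < N)
    (H₀ H₁ : EuclideanSpace ℂ (Fin N) →L[ℂ] EuclideanSpace ℂ (Fin N))
    (hH₀ : IsSelfAdjoint H₀) (hH₁ : IsSelfAdjoint H₁)
    (φ₀ φ₁ : OrthonormalBasis (Fin N) ℂ (EuclideanSpace ℂ (Fin N)))
    (e0 e1 : Fin N → ℝ)
    (h0 : ∀ m, H₀ (φ₀ m) = (e0 m : ℂ) • φ₀ m)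
    (h1 : ∀ n, H₁ (φ₁ n) = (e1 n : ℂ) • φ₁ n)
    (𝒰 : EuclideanSpace ℂ (Fin N) ≃ₗᵢ[ℂ] EuclideanSpace ℂ (Fin N))
    (β : ℝ) (hβ : 0 ≤ β)
    (Z₀ Z₁ : ℝ)
    (hZ₀ : Z₀ = ∑ m, Real.exp (-β * e0 m))
    (hZ₁ : Z₁ = ∑ n, Real.exp (-β * e1 n))
    (W UI : EuclideanSpace ℂ (Fin N × Fin N) →L[ℂ] EuclideanSpace ℂ (Fin N × Fin N))
    (hW : ∀ m n, W (tensorVec (φ₁ n) (starVec (φ₀ m)))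
        = ((e1 n - e0 m : ℝ) : ℂ) • tensorVec (φ₁ n) (starVec (φ₀ m)))
    (hUI : ∀ u v, UI (tensorVec u v) = tensorVec (𝒰 u) v)
    (Ψ₀ : EuclideanSpace ℂ (Fin N × Fin N))
    (hΨ₀ : Ψ₀ = ((Real.sqrt Z₀ : ℝ) : ℂ)⁻¹ •
        ∑ m, ((Real.exp (-β * e0 m / 2) : ℝ) : ℂ) • tensorVec (φ₀ m) (starVec (φ₀ m))) :
    ‖(NormedSpace.exp (((-(β / 2) : ℝ) : ℂ) • W)) (UI Ψ₀)‖ = Real.sqrt (Z₁ / Z₀) ∧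
    (0 < β →
      Real.sqrt (Z₁ / Z₀) =
        Real.exp (-β * (-(1 / β) * Real.log (Z₁ / Z₀)) / 2)) :=
  purification_norm_identity_general hN φ₀ φ₁ e0 e1 𝒰 β Z₀ Z₁ hZ₀ hZ₁ W UI hW hUI Ψ₀ hΨ₀
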